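/- arXiv:1107.4678 — 5 statements merged into one kernel-verified Lean document; each statement's English description precedes it below -/
import Mathlib

section
/- Let X be a metric space and S a collection of continuous self-maps of X that contains the identity and is closed under composition. Assume that for every x ∈ X the orbit O(x) = {f(x) : f ∈ S} is compact. Call a subset K ⊆ X minimal if it is nonempty, compact, invariant (f(K) ⊆ K for every f ∈ S), and contains no proper nonempty compact invariant subset. Then a point x ∈ X belongs to some minimal set if and only if for every f ∈ S there exists f' ∈ S such that f'(f(x)) = x; moreover, in this case the orbit O(x) is itself a minimal set. -/
/-- The orbit of a point `x` under a set `S` of self-maps of `X`. -/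
def orbitOf {X : Type*} (S : Set (X → X)) (x : X) : Set X :=
  {y | ∃ f ∈ S, f x = y}

/-- A subset `K ⊆ X` is minimal for the action of `S` if it is nonempty, compact,
invariant under every map of `S`, and contains no proper nonempty compact invariant
subset. -/
def IsMinimalSet {X : Type*} [TopologicalSpace X] (S : Set (X → X)) (K : Set X) : Prop :=
  K.Nonempty ∧ IsCompact K ∧ (∀ f ∈ S, f '' K ⊆ K) ∧
    ∀ K' : Set X, K' ⊆ K → K'.Nonempty → IsCompact K' → (∀ f ∈ S, f '' K' ⊆ K') → K' = K

theorem mem_minimal_iff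
    {X : Type*} [MetricSpace X] (S : Set (X → X))
    (hcont : ∀ f ∈ S, Continuous f)
    (hid : (id : X → X) ∈ S)
    (hcomp : ∀ f ∈ S, ∀ g ∈ S, g ∘ f ∈ S)
    (horb : ∀ x : X, IsCompact (orbitOf S x)) (x : X) :
    ((∃ K : Set X, IsMinimalSet S K ∧ x ∈ K) ↔ ∀ f ∈ S, ∃ f' ∈ S, f' (f x) = x) ∧
    ((∀ f ∈ S, ∃ f' ∈ S, f' (f x) = x) → IsMinimalSet S (orbitOf S x)) := by
  have hself : ∀ y : X, y ∈ orbitOf S y := fun y => ⟨id, hid, rfl⟩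
  have hinv : ∀ y : X, ∀ f ∈ S, f '' orbitOf S y ⊆ orbitOf S y := by
    rintro y f hf z ⟨w, ⟨g, hg, rfl⟩, rfl⟩
    exact ⟨f ∘ g, hcomp g hg f hf, rfl⟩
  have main : (∀ f ∈ S, ∃ f' ∈ S, f' (f x) = x) → IsMinimalSet S (orbitOf S x) := by
    intro hcond
    refine ⟨⟨x, hself x⟩, horb x, hinv x, ?_⟩
    intro K' hK' hne hKc hKinv
    obtain ⟨y, hy⟩ := hne
    obtain ⟨f, hf, hfx⟩ := hK' hy
    obtain ⟨f', hf', hf'x⟩ := hcond f hf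
    have hxK' : x ∈ K' := by
      have hyx : f' y = x := by rw [← hfx]; exact hf'x
      exact hyx ▸ hKinv f' hf' ⟨y, hy, rfl⟩
    refine Set.Subset.antisymm hK' ?_
    rintro z ⟨g, hg, rfl⟩
    exact hKinv g hg ⟨x, hxK', rfl⟩
  refine ⟨⟨?_, fun h => ⟨orbitOf S x, main h, hself x⟩⟩, main⟩
  rintro ⟨K, ⟨hne, hKc, hKinv, hmin⟩, hxK⟩ f hf
  have hyK : f x ∈ K := hKinv f hf ⟨x, hxK, rfl⟩
  have hsub : orbitOf S (f x) ⊆ K := by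
    rintro z ⟨g, hg, rfl⟩
    exact hKinv g hg ⟨f x, hyK, rfl⟩
  have heq := hmin (orbitOf S (f x)) hsub ⟨f x, hself _⟩ (horb _) (hinv _)
  rw [← heq] at hxK
  exact hxK
end

section
/- Let M be a nonempty compact metric space, A : M × M → ℝ a cost and u : M → ℝ continuous. The set-valued map (A,u) ↦ I_A(u) is upper semicontinuous: for every open set U ⊆ M with I_A(u) ⊆ U there exists ε > 0 such that for every cost A' and every continuous u' : M → ℝ with sup |A' − A| < ε and sup |u' − u| < ε one has I_{A'}(u') ⊆ U. -/
/-- The Lax–Oleinik operator associated to a cost `A : M × M → ℝ`: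
`T_A u (x) = inf_{y ∈ M} (u y + A (y, x))`. -/
noncomputable def laxOleinik {M : Type*} [MetricSpace M] [CompactSpace M] [Nonempty M]
    (A : M × M → ℝ) (u : M → ℝ) : M → ℝ :=
  fun x => ⨅ y : M, (u y + A (y, x))

/-- The set `I_A(u)` of points `y ∈ M` such that `T_A u (x) = u y + A (y, x)` for
some `x ∈ M`. -/
def ISet {M : Type*} [MetricSpace M] [CompactSpace M] [Nonempty M]
    (A : M × M → ℝ) (u : M → ℝ) : Set M :=
  {y | ∃ x : M, laxOleinik A u x = u y + A (y, x)}

section Aux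

variable {M : Type*} [MetricSpace M] [CompactSpace M] [Nonempty M]

lemma aux_bddBelow {f : M → ℝ} (hf : Continuous f) : BddBelow (Set.range f) :=
  (isCompact_range hf).bddBelow

lemma aux_bddAbove {f : M → ℝ} (hf : Continuous f) : BddAbove (Set.range f) :=
  (isCompact_range hf).bddAbove

lemma aux_ciInf_le_ciInf_add {f g : M → ℝ} (hf : Continuous f) {c : ℝ}
    (h : ∀ a, f a ≤ g a + c) : (⨅ a, f a) ≤ (⨅ a, g a) + c := by
  rw [← sub_le_iff_le_add]
  refine le_ciInf fun a => ?_
  rw [sub_le_iff_le_add]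
  exact (ciInf_le (aux_bddBelow hf) a).trans (h a)

lemma aux_exists_inf {f : M → ℝ} (hf : Continuous f) : ∃ y, (⨅ z, f z) = f y := by
  obtain ⟨y, -, hy⟩ := isCompact_univ.exists_isMinOn Set.univ_nonempty hf.continuousOn
  exact ⟨y, le_antisymm (ciInf_le (aux_bddBelow hf) y)
    (le_ciInf fun z => hy (Set.mem_univ z))⟩

lemma aux_cont_inf {f : M × M → ℝ} (hf : Continuous f) :
    Continuous fun b => ⨅ a, f (a, b) := by
  rw [Metric.continuous_iff]
  intro b ε hε
  have huc := CompactSpace.uniformContinuous_of_continuous hf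
  rw [Metric.uniformContinuous_iff] at huc
  obtain ⟨δ, hδ, H⟩ := huc (ε / 2) (by linarith)
  refine ⟨δ, hδ, fun b' hb' => ?_⟩
  have hc1 : Continuous fun a => f (a, b') := hf.comp (by continuity)
  have hc2 : Continuous fun a => f (a, b) := hf.comp (by continuity)
  have key : ∀ (c d : M), dist c d < δ → ∀ a : M, |f (a, c) - f (a, d)| ≤ ε / 2 := by
    intro c d hcd a
    have : dist ((a, c) : M × M) (a, d) < δ := by
      rw [Prod.dist_eq]
      simp [hcd, dist_nonneg.trans_lt hcd]
    have := H this
    rw [Real.dist_eq] at this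
    linarith
  have h1 : (⨅ a, f (a, b')) ≤ (⨅ a, f (a, b)) + ε / 2 :=
    aux_ciInf_le_ciInf_add hc1 fun a => by
      have := abs_le.mp (key b' b hb' a); linarith
  have h2 : (⨅ a, f (a, b)) ≤ (⨅ a, f (a, b')) + ε / 2 :=
    aux_ciInf_le_ciInf_add hc2 fun a => by
      have := abs_le.mp (key b' b hb' a); linarith
  rw [Real.dist_eq, abs_sub_lt_iff]
  constructor <;> linarith

end Aux

theorem ISet_upper_semicontinuous
    {M : Type*} [MetricSpace M] [CompactSpace M] [Nonempty M]
    (A : M × M → ℝ) (hA : Continuous A) (u : M → ℝ) (hu : Continuous u)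
    (U : Set M) (hU : IsOpen U) (hsub : ISet A u ⊆ U) :
    ∃ ε > (0 : ℝ), ∀ (A' : M × M → ℝ) (u' : M → ℝ), Continuous A' → Continuous u' →
      (⨆ p : M × M, |A' p - A p|) < ε → (⨆ y : M, |u' y - u y|) < ε →
      ISet A' u' ⊆ U := by
  classical
  -- T = laxOleinik A u is continuous
  have hT : Continuous (laxOleinik A u) := by
    have : Continuous fun p : M × M => u p.1 + A (p.1, p.2) := by continuity
    exact aux_cont_inf this
  -- the function F
  set F : M → ℝ := fun y => ⨅ x, (u y + A (y, x) - laxOleinik A u x) with hF_def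
  have hg : Continuous fun p : M × M => u p.2 + A (p.2, p.1) - laxOleinik A u p.1 := by
    apply Continuous.sub
    · exact (hu.comp continuous_snd).add (hA.comp (by continuity))
    · exact hT.comp continuous_fst
  have hF : Continuous F := aux_cont_inf hg
  have hgy : ∀ y : M, Continuous fun x => u y + A (y, x) - laxOleinik A u x := fun y =>
    hg.comp (by continuity : Continuous fun x : M => ((x, y) : M × M))
  -- F y ≥ 0
  have hF0 : ∀ y, 0 ≤ F y := by
    intro y
    refine le_ciInf fun x => ?_
    have : laxOleinik A u x ≤ u y + A (y, x) :=
      ciInf_le (aux_bddBelow (by continuity)) y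
    linarith
  -- F y = 0 → y ∈ ISet A u
  have hFmem : ∀ y, F y = 0 → y ∈ ISet A u := by
    intro y hy
    obtain ⟨x, hx⟩ := aux_exists_inf (hgy y)
    refine ⟨x, ?_⟩
    have h2 : F y = u y + A (y, x) - laxOleinik A u x := hx
    linarith
  by_cases hK : (Uᶜ).Nonempty
  · -- δ = min of F on Uᶜ
    obtain ⟨y₀, hy₀K, hy₀⟩ :=
      (hU.isClosed_compl.isCompact).exists_isMinOn hK hF.continuousOn
    set δ := F y₀ with hδdef
    have hδpos : 0 < δ := by
      rcases lt_or_eq_of_le (hF0 y₀) with h | h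
      · exact h
      · exact absurd (hsub (hFmem y₀ h.symm)) hy₀K
    refine ⟨δ / 5, by linarith, fun A' u' hA' hu' hsA hsu y hy => ?_⟩
    by_contra hyU
    have hyK : y ∈ Uᶜ := hyU
    have hFy : δ ≤ F y := hy₀ hyK
    obtain ⟨x, hx⟩ := hy
    -- pointwise bounds
    set ε := δ / 5 with hε
    have hbA : ∀ p : M × M, |A' p - A p| ≤ ε := fun p =>
      le_of_lt (lt_of_le_of_lt
        (le_ciSup (aux_bddAbove ((hA'.sub hA).abs)) p) hsA)
    have hbu : ∀ z : M, |u' z - u z| ≤ ε := fun z =>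
      le_of_lt (lt_of_le_of_lt
        (le_ciSup (aux_bddAbove ((hu'.sub hu).abs)) z) hsu)
    -- T x ≥ T' x - 2ε
    have hTT' : laxOleinik A' u' x ≤ laxOleinik A u x + 2 * ε := by
      refine aux_ciInf_le_ciInf_add (by continuity) fun z => ?_
      have h1 := abs_le.mp (hbA (z, x))
      have h2 := abs_le.mp (hbu z)
      linarith
    -- F y ≤ u y + A (y,x) - T x
    have hFle : F y ≤ u y + A (y, x) - laxOleinik A u x :=
      ciInf_le (aux_bddBelow (hgy y)) x
    have h1 := abs_le.mp (hbA (y, x))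
    have h2 := abs_le.mp (hbu y)
    -- hx : laxOleinik A' u' x = u' y + A' (y, x)
    have : F y ≤ 4 * ε := by
      have := hx
      linarith
    have : δ ≤ 4 * ε := le_trans hFy this
    rw [hε] at this
    linarith
  · -- Uᶜ empty : U = univ
    refine ⟨1, one_pos, fun A' u' _ _ _ _ z _ => ?_⟩
    by_contra h
    exact hK ⟨z, h⟩
end

section
/- Let E be a finite-dimensional real inner product space, C₁, C₂ ∈ ℝ, and let u, v : E → ℝ be respectively C₁-semiconcave and C₂-semiconcave. If x₀ ∈ E is a local minimum point of u + v, then both u and v are differentiable at x₀ and the (Fréchet) derivatives satisfy Du(x₀) + Dv(x₀) = 0. In particular (taking v = 0), a semiconcave function is differentiable with derivative 0 at every local minimum point. -/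
/-!
Subtracting `(C/2)‖·‖²` turns a semiconcave `u` into a concave, hence continuous, function `φ`,
whose supergradient at `x₀` (Hahn–Banach, separating `(x₀, φ x₀)` from the open strict hypograph)
gives a paraboloid above `u` touching it at `x₀`:
`u x ≤ u x₀ + ℓ (x - x₀) + (C/2)‖x - x₀‖²`.
If `x₀` is a local minimum of `u + v`, the sum `(ℓ₁ + ℓ₂) (x - x₀) + ((C₁ + C₂)/2)‖x - x₀‖²` of
the paraboloids of `u` and `v` has a local minimum at `x₀`, so `ℓ₁ + ℓ₂ = 0` by Fermat's rule.
Then near `x₀` both `u x ≤ u x₀ + ℓ₁ (x - x₀) + (C₁/2)‖x - x₀‖²` and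
`u x ≥ u x₀ + v x₀ - v x ≥ u x₀ + ℓ₁ (x - x₀) - (C₂/2)‖x - x₀‖²`,
so `u` has derivative `ℓ₁` at `x₀`, and symmetrically `v` has derivative `-ℓ₁`.
-/

/-- A function `u : E → ℝ` is `C`-semiconcave if `x ↦ u x − (C/2)‖x‖²` is concave. -/
def Semiconcave {E : Type*} [NormedAddCommGroup E] [InnerProductSpace ℝ E]
    (C : ℝ) (u : E → ℝ) : Prop :=
  ConcaveOn ℝ Set.univ (fun x => u x - (C / 2) * ‖x‖ ^ 2)

open Filter Asymptotics Set
open scoped Topology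

section NormedSpace

variable {E : Type*} [NormedAddCommGroup E] [NormedSpace ℝ E]

theorem ConcaveOn.exists_supergradient {φ : E → ℝ} (hφ : ConcaveOn ℝ univ φ)
    (hcont : Continuous φ) (x₀ : E) :
    ∃ L : E →L[ℝ] ℝ, ∀ x, φ x ≤ φ x₀ + L (x - x₀) := by
  set s : Set (E × ℝ) := {p | p.2 < φ p.1}
  have hconv : Convex ℝ s := by simpa using hφ.convex_strict_hypograph
  have hopen : IsOpen s := isOpen_lt continuous_snd (hcont.comp continuous_fst)
  obtain ⟨f, hf⟩ := geometric_hahn_banach_open_point hconv hopen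
    (show (x₀, φ x₀) ∉ s by simp [s])
  set g : E →L[ℝ] ℝ := f.comp (.inl ℝ E ℝ)
  set c : ℝ := f (0, 1)
  have hf_apply : ∀ x y, f (x, y) = g x + y * c := fun x y => by
    have hxy : (x, y) = (x, (0 : ℝ)) + y • ((0 : E), (1 : ℝ)) := by simp
    rw [hxy, map_add, map_smul, smul_eq_mul]
    rfl
  have hsep : ∀ x y, y < φ x → g x + y * c < g x₀ + φ x₀ * c := fun x y hy => by
    simpa only [hf_apply] using hf (x, y) hy
  have hc : 0 < c := by linarith [hsep x₀ (φ x₀ - 1) (by linarith)]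
  refine ⟨-c⁻¹ • g, fun x => le_of_forall_lt fun y hy => ?_⟩
  have hL : (-c⁻¹ • g) (x - x₀) = (g x₀ - g x) / c := by
    simp only [FunLike.coe_smul, Pi.smul_apply, map_sub, smul_eq_mul]
    field_simp
    ring
  rw [hL, ← sub_lt_iff_lt_add', lt_div_iff₀ hc]
  linarith [hsep x y hy]

theorem HasFDerivAt.of_isBigO_norm_sub_sq {F : Type*} [NormedAddCommGroup F] [NormedSpace ℝ F]
    {f : E → F} {ℓ : E →L[ℝ] F} {x₀ : E}
    (hf : (fun x => f x - f x₀ - ℓ (x - x₀)) =O[𝓝 x₀] fun x => ‖x - x₀‖ ^ 2) :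
    HasFDerivAt f ℓ x₀ :=
  .of_isLittleO <| hf.trans_isLittleO <| (isLittleO_norm_pow_id one_lt_two).comp_tendsto
    (tendsto_sub_nhds_zero_iff.2 tendsto_id)

def IsProximalSupergradient (u : E → ℝ) (ℓ : E →L[ℝ] ℝ) (σ : ℝ) (x₀ : E) : Prop :=
  ∀ᶠ x in 𝓝 x₀, u x ≤ u x₀ + ℓ (x - x₀) + σ * ‖x - x₀‖ ^ 2

namespace IsProximalSupergradient

variable {u v : E → ℝ} {ℓ ℓ₁ ℓ₂ : E →L[ℝ] ℝ} {σ σ₁ σ₂ : ℝ} {x₀ : E}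

theorem add (hu : IsProximalSupergradient u ℓ₁ σ₁ x₀) (hv : IsProximalSupergradient v ℓ₂ σ₂ x₀) :
    IsProximalSupergradient (fun x => u x + v x) (ℓ₁ + ℓ₂) (σ₁ + σ₂) x₀ := by
  filter_upwards [hu, hv] with x hu hv
  rw [add_apply]
  linarith

theorem eq_zero_of_isLocalMin (hu : IsProximalSupergradient u ℓ σ x₀) (hmin : IsLocalMin u x₀) :
    ℓ = 0 := by
  have hmin_paraboloid : IsLocalMin (fun x => ℓ (x - x₀) + σ * ‖x - x₀‖ ^ 2) x₀ := by
    filter_upwards [hu, hmin] with x hu hmin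
    simp only [sub_self, map_zero, norm_zero]
    linarith
  refine hmin_paraboloid.hasFDerivAt_eq_zero (.of_isBigO_norm_sub_sq ?_)
  simpa using (isBigO_refl (fun x => ‖x - x₀‖ ^ 2) (𝓝 x₀)).const_mul_left σ

theorem hasFDerivAt_of_isLocalMin_add (hu : IsProximalSupergradient u ℓ σ₁ x₀)
    (hv : IsProximalSupergradient v (-ℓ) σ₂ x₀) (hmin : IsLocalMin (fun x => u x + v x) x₀) :
    HasFDerivAt u ℓ x₀ := by
  refine .of_isBigO_norm_sub_sq (IsBigO.of_bound (max σ₁ σ₂) ?_)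
  filter_upwards [hu, hv, hmin] with x hu hv hmin
  have hσ₁ := mul_le_mul_of_nonneg_right (le_max_left σ₁ σ₂) (sq_nonneg ‖x - x₀‖)
  have hσ₂ := mul_le_mul_of_nonneg_right (le_max_right σ₁ σ₂) (sq_nonneg ‖x - x₀‖)
  rw [neg_apply] at hv
  rw [Real.norm_eq_abs, norm_pow, norm_norm, abs_le]
  constructor <;> linarith

end IsProximalSupergradient

end NormedSpace

section InnerProductSpace

variable {E : Type*} [NormedAddCommGroup E] [InnerProductSpace ℝ E] [FiniteDimensional ℝ E]

theorem Semiconcave.exists_isProximalSupergradient {C : ℝ} {u : E → ℝ} (hu : Semiconcave C u)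
    (x₀ : E) : ∃ ℓ, IsProximalSupergradient u ℓ (C / 2) x₀ := by
  obtain ⟨L, hL⟩ := hu.exists_supergradient (continuousOn_univ.1 (hu.continuousOn isOpen_univ)) x₀
  refine ⟨L + C • innerSL ℝ x₀, Eventually.of_forall fun x => ?_⟩
  have hnorm := norm_add_sq_real x₀ (x - x₀)
  rw [add_sub_cancel] at hnorm
  have hLx := hL x
  rw [hnorm] at hLx
  simp only [add_apply, FunLike.coe_smul, Pi.smul_apply, innerSL_apply_apply, smul_eq_mul]
  linarith

theorem Semiconcave.hasFDerivAt_of_isLocalMin_add {C₁ C₂ : ℝ} {u v : E → ℝ}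
    (hu : Semiconcave C₁ u) (hv : Semiconcave C₂ v) {x₀ : E}
    (hmin : IsLocalMin (fun x => u x + v x) x₀) :
    ∃ ℓ : E →L[ℝ] ℝ, HasFDerivAt u ℓ x₀ ∧ HasFDerivAt v (-ℓ) x₀ := by
  obtain ⟨ℓ₁, hℓ₁⟩ := hu.exists_isProximalSupergradient x₀
  obtain ⟨ℓ₂, hℓ₂⟩ := hv.exists_isProximalSupergradient x₀
  obtain rfl : ℓ₂ = -ℓ₁ := eq_neg_of_add_eq_zero_right ((hℓ₁.add hℓ₂).eq_zero_of_isLocalMin hmin)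
  refine ⟨ℓ₁, hℓ₁.hasFDerivAt_of_isLocalMin_add hℓ₂ hmin, ?_⟩
  exact hℓ₂.hasFDerivAt_of_isLocalMin_add (by rwa [neg_neg]) (by simpa only [add_comm] using hmin)

end InnerProductSpace

theorem semiconcave_localMin_differentiable
    {E : Type*} [NormedAddCommGroup E] [InnerProductSpace ℝ E] [FiniteDimensional ℝ E]
    (C₁ C₂ : ℝ) (u v : E → ℝ)
    (hu : Semiconcave C₁ u) (hv : Semiconcave C₂ v)
    (x₀ : E) (hmin : IsLocalMin (fun x => u x + v x) x₀) :
    (DifferentiableAt ℝ u x₀ ∧ DifferentiableAt ℝ v x₀ ∧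
      fderiv ℝ u x₀ + fderiv ℝ v x₀ = 0) ∧
    -- In particular (taking `v = 0`), a semiconcave function is differentiable with
    -- derivative `0` at every local minimum point.
    (∀ (C : ℝ) (w : E → ℝ), Semiconcave C w → ∀ x : E, IsLocalMin w x →
      DifferentiableAt ℝ w x ∧ fderiv ℝ w x = 0) := by
  obtain ⟨ℓ, hu', hv'⟩ := hu.hasFDerivAt_of_isLocalMin_add hv hmin
  refine ⟨⟨hu'.differentiableAt, hv'.differentiableAt, ?_⟩, fun C w hw x hx => ?_⟩
  · rw [hu'.fderiv, hv'.fderiv, add_neg_cancel]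
  have hzero : Semiconcave 0 (fun _ : E => (0 : ℝ)) := by
    simpa [Semiconcave] using concaveOn_const (0 : ℝ) (convex_univ (𝕜 := ℝ) (E := E))
  obtain ⟨ℓ, hw', hzero'⟩ := hw.hasFDerivAt_of_isLocalMin_add hzero (by simpa using hx)
  obtain rfl : ℓ = 0 := neg_eq_zero.1 (hzero'.unique (hasFDerivAt_const 0 x))
  exact ⟨hw'.differentiableAt, hw'.fderiv⟩
end

section
/- A function which is both semiconcave and semiconvex is C^{1,1}: let E be a finite-dimensional real inner product space, C ≥ 0, and u : E → ℝ a function which is both C-semiconcave and C-semiconvex (i.e. x ↦ u(x) − (C/2)‖x‖² is concave and x ↦ u(x) + (C/2)‖x‖² is convex on E). Then u is differentiable at every point of E and the derivative map x ↦ Du(x) is C-Lipschitz. -/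
/-!
With `g = u + (C/2)‖·‖²` and `f = (C/2)‖·‖² - u` both convex, subgradients of `g` and `f` at `x`
give affine minorants of `u + (C/2)‖· - x‖²` and majorants of `u - (C/2)‖· - x‖²`; the gap
between the two affine parts is a linear form bounded by `C‖h‖²`, hence zero. So `u` has a
first-order Taylor expansion with remainder at most `(C/2)‖z - x‖²` at every point, which gives
differentiability. Comparing the expansions at `m ± d`, evaluated at `m ± t`, eliminates `u` and
yields `⟪Du(m + d) - Du(m - d), t⟫ ≤ C (‖t‖² + ‖d‖²)`; optimizing over `t` gives the sharp
Lipschitz bound `‖Du(x) - Du(y)‖ ≤ C‖x - y‖`.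
-/

open Set
open scoped RealInnerProductSpace

/-- A function `u : E → ℝ` is `C`-semiconvex if `−u` is `C`-semiconcave, i.e.
`x ↦ u x + (C/2)‖x‖²` is convex. -/
def Semiconvex {E : Type*} [NormedAddCommGroup E] [InnerProductSpace ℝ E]
    (C : ℝ) (u : E → ℝ) : Prop :=
  Semiconcave C (fun x => -u x)

theorem ConvexOn.exists_strongDual_add_le {E : Type*} [NormedAddCommGroup E] [NormedSpace ℝ E]
    {g : E → ℝ} (hg : ConvexOn ℝ univ g) (hg_cont : Continuous g) (x : E) :
    ∃ L : StrongDual ℝ E, ∀ z, g x + L (z - x) ≤ g z := by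
  set U : Set (E × ℝ) := {p | p.1 ∈ univ ∧ g p.1 < p.2}
  have hU_convex : Convex ℝ U := convex_iff_openSegment_subset.2 fun p hp q hq =>
    hg.openSegment_subset_strict_epigraph p q hp ⟨hq.1, hq.2.le⟩
  have hU_open : IsOpen U := by
    simpa [U] using isOpen_lt (hg_cont.comp continuous_fst) continuous_snd
  obtain ⟨f, hf⟩ := geometric_hahn_banach_open_point hU_convex hU_open (x := (x, g x)) (by simp [U])
  -- `f (z, t) = φ z + t c` with vertical slope `c < 0`; rescaling `c` to `-1` gives the subgradient.
  set φ := f.comp (.inl ℝ E ℝ)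
  set c := f (0, 1)
  have hf_apply : ∀ z t, f (z, t) = φ z + t * c := fun z t => by
    have h : ((0 : E), t) = t • ((0 : E), (1 : ℝ)) := by simp
    rw [← f.comp_inl_add_comp_inr]
    simp only [ContinuousLinearMap.comp_apply, ContinuousLinearMap.inr_apply, h, map_smul,
      smul_eq_mul, φ, c]
  have hsep : ∀ z t, g z < t → φ (z - x) < (g x - t) * c := fun z t ht => by
    have := hf (z, t) ⟨mem_univ z, ht⟩
    rw [hf_apply, hf_apply] at this
    rw [map_sub]
    linarith
  have hc_neg : c < 0 := by
    have := hsep x (g x + 1) (by linarith)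
    simp only [sub_self, map_zero] at this
    linarith
  refine ⟨(-c)⁻¹ • φ, fun z => le_of_forall_gt fun t ht => ?_⟩
  have := hsep z t ht
  show g x + (-c)⁻¹ * φ (z - x) < t
  rw [← lt_sub_iff_add_lt', inv_mul_lt_iff₀ (neg_pos.2 hc_neg)]
  linarith

theorem hasFDerivAt_of_norm_sub_le {E F : Type*} [NormedAddCommGroup E] [NormedSpace ℝ E]
    [NormedAddCommGroup F] [NormedSpace ℝ F] {f : E → F} {L : E →L[ℝ] F} {x : E} {K : ℝ}
    (h : ∀ z, ‖f z - f x - L (z - x)‖ ≤ K * ‖z - x‖ ^ 2) : HasFDerivAt f L x := by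
  rw [hasFDerivAt_iff_isLittleO_nhds_zero]
  refine Asymptotics.IsBigO.trans_isLittleO ?_ (Asymptotics.isLittleO_norm_pow_id one_lt_two)
  refine Asymptotics.IsBigO.of_bound K (Filter.Eventually.of_forall fun z => ?_)
  simpa using h (x + z)

section InnerProductSpace

variable {E : Type*} [NormedAddCommGroup E] [InnerProductSpace ℝ E]

theorem ConvexOn.exists_inner_add_le [FiniteDimensional ℝ E] {g : E → ℝ}
    (hg : ConvexOn ℝ univ g) (x : E) : ∃ v : E, ∀ z, g x + ⟪v, z - x⟫ ≤ g z := by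
  obtain ⟨L, hL⟩ := hg.exists_strongDual_add_le hg.locallyLipschitz.continuous x
  exact ⟨(InnerProductSpace.toDual ℝ E).symm L, by simpa using hL⟩

theorem norm_le_of_forall_inner_le {e : E} {C r : ℝ} (hC : 0 ≤ C) (hr : 0 ≤ r)
    (h : ∀ t, ⟪e, t⟫ ≤ C * (‖t‖ ^ 2 + r ^ 2)) : ‖e‖ ≤ 2 * C * r := by
  rcases hC.eq_or_lt with rfl | hC
  · have := h e
    rw [real_inner_self_eq_norm_sq, zero_mul] at this
    simpa using this
  · have := h ((2 * C)⁻¹ • e)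
    rw [real_inner_smul_right, real_inner_self_eq_norm_sq, norm_smul, Real.norm_eq_abs,
      abs_of_pos (by positivity)] at this
    have hsq : ‖e‖ ^ 2 ≤ (2 * C * r) ^ 2 := by
      field_simp at this
      nlinarith
    exact (pow_le_pow_iff_left₀ (norm_nonneg e) (by positivity) two_ne_zero).1 hsq

theorem Semiconcave.convexOn_sq_sub {C : ℝ} {u : E → ℝ} (hu : Semiconcave C u) :
    ConvexOn ℝ univ (fun z => C / 2 * ‖z‖ ^ 2 - u z) :=
  hu.neg.congr fun z _ => by simp only [Pi.neg_apply, neg_sub]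

theorem Semiconcave.exists_sub_inner_le [FiniteDimensional ℝ E] {C : ℝ} {u : E → ℝ}
    (hu : Semiconcave C u) (x : E) :
    ∃ b : E, ∀ z, u z - u x - ⟪b, z - x⟫ ≤ C / 2 * ‖z - x‖ ^ 2 := by
  obtain ⟨w, hw⟩ := hu.convexOn_sq_sub.exists_inner_add_le x
  refine ⟨C • x - w, fun z => ?_⟩
  have hz : ‖z‖ ^ 2 = ‖x‖ ^ 2 + 2 * ⟪x, z - x⟫ + ‖z - x‖ ^ 2 := by
    simpa using norm_add_sq_real x (z - x)
  have := hw z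
  rw [inner_sub_left, real_inner_smul_left]
  linear_combination this + C / 2 * hz

theorem exists_abs_sub_inner_le [FiniteDimensional ℝ E] {C : ℝ} (hC : 0 ≤ C) {u : E → ℝ}
    (hconc : Semiconcave C u) (hconv : Semiconvex C u) (x : E) :
    ∃ p : E, ∀ z, |u z - u x - ⟪p, z - x⟫| ≤ C / 2 * ‖z - x‖ ^ 2 := by
  obtain ⟨b, hb⟩ := hconc.exists_sub_inner_le x
  obtain ⟨a, ha⟩ := Semiconcave.exists_sub_inner_le hconv x
  have hab : a + b = 0 := by
    refine norm_le_zero_iff.1 ?_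
    have := norm_le_of_forall_inner_le (e := a + b) (r := 0) hC le_rfl fun t => by
      have h1 := ha (x - t)
      have h2 := hb (x - t)
      simp only [sub_sub_cancel_left, inner_neg_right, norm_neg] at h1 h2
      rw [inner_add_left, sq 0, mul_zero, add_zero]
      linarith
    simpa using this
  refine ⟨b, fun z => abs_le.2 ⟨?_, hb z⟩⟩
  have := ha z
  rw [eq_neg_of_add_eq_zero_left hab, inner_neg_left] at this
  linarith

theorem inner_sub_le_of_abs_sub_inner_le {C : ℝ} {u : E → ℝ} {P : E → E}
    (hP : ∀ x z, |u z - u x - ⟪P x, z - x⟫| ≤ C / 2 * ‖z - x‖ ^ 2) (m d t : E) :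
    ⟪P (m + d) - P (m - d), t⟫ ≤ C * (‖t‖ ^ 2 + ‖d‖ ^ 2) := by
  have h1 := (abs_le.1 (hP (m + d) (m - t))).2
  have h2 := (abs_le.1 (hP (m - d) (m - t))).1
  have h3 := (abs_le.1 (hP (m + d) (m + t))).1
  have h4 := (abs_le.1 (hP (m - d) (m + t))).2
  rw [show m - t - (m + d) = -(t + d) by abel] at h1
  rw [show m - t - (m - d) = -(t - d) by abel] at h2
  rw [show m + t - (m + d) = t - d by abel] at h3
  rw [show m + t - (m - d) = t + d by abel] at h4
  simp only [inner_neg_right, norm_neg, inner_add_right, inner_sub_right] at h1 h2 h3 h4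
  have hpar := parallelogram_law_with_norm ℝ t d
  rw [inner_sub_left]
  linear_combination (h1 + h2 + h3 + h4 + C * hpar) / 2

theorem lipschitzWith_of_abs_sub_inner_le {C : ℝ} (hC : 0 ≤ C) {u : E → ℝ} {P : E → E}
    (hP : ∀ x z, |u z - u x - ⟪P x, z - x⟫| ≤ C / 2 * ‖z - x‖ ^ 2) :
    LipschitzWith C.toNNReal P := by
  refine LipschitzWith.of_dist_le_mul fun x y => ?_
  set d : E := (1 / 2 : ℝ) • (x - y)
  set m : E := (1 / 2 : ℝ) • (x + y)
  have hx : m + d = x := by module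
  have hy : m - d = y := by module
  have hd : ‖d‖ = ‖x - y‖ / 2 := by
    rw [norm_smul, Real.norm_of_nonneg one_half_pos.le]
    ring
  have := norm_le_of_forall_inner_le hC (norm_nonneg d) (inner_sub_le_of_abs_sub_inner_le hP m d)
  rw [hx, hy, hd] at this
  rw [dist_eq_norm, dist_eq_norm, Real.coe_toNNReal C hC]
  linarith

end InnerProductSpace

/-- A function which is both `C`-semiconcave and `C`-semiconvex is `C¹,¹`: it is
everywhere differentiable with `C`-Lipschitz derivative. -/
theorem semiconcave_semiconvex_C11
    {E : Type*} [NormedAddCommGroup E] [InnerProductSpace ℝ E] [FiniteDimensional ℝ E]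
    (C : ℝ) (hC : 0 ≤ C) (u : E → ℝ)
    (hconc : Semiconcave C u) (hconv : Semiconvex C u) :
    (∀ x : E, DifferentiableAt ℝ u x) ∧
    LipschitzWith (Real.toNNReal C) (fun x => fderiv ℝ u x) := by
  choose P hP using exists_abs_sub_inner_le hC hconc hconv
  have hderiv : ∀ x, HasFDerivAt u (InnerProductSpace.toDual ℝ E (P x)) x := fun x =>
    hasFDerivAt_of_norm_sub_le (K := C / 2) fun z => by simpa using hP x z
  refine ⟨fun x => (hderiv x).differentiableAt, ?_⟩
  simp only [fun x => (hderiv x).fderiv]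
  have h := (InnerProductSpace.toDual ℝ E).lipschitz.comp (lipschitzWith_of_abs_sub_inner_le hC hP)
  rw [one_mul] at h
  exact h
end

section
/- Existence and uniqueness of the Peierls constant: let M be a nonempty compact metric space and A : M × M → ℝ a cost. Define the iterated costs by A¹ = A and A^{n+1}(y,x) = min_{z ∈ M} (Aⁿ(y,z) + A(z,x)). Then there exists a unique real number α such that for every (y,x) ∈ M × M the sequence n ↦ Aⁿ(y,x) + n·α is bounded below and does not tend to +∞ (equivalently, its inferior limit is a real number). -/
/-!
Write `cₙ` and `bₙ` for the minimum and the maximum of `Aⁿ`. Concatenating paths makes `c`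
superadditive and `b` subadditive, so `cₙ / n ≤ bₖ / k` for all `n, k`, and `σ = supₙ cₙ / n`
satisfies `cₙ ≤ nσ ≤ bₙ`. Changing the first and the last step of a path costs at most
`2 max A`, whence `bₙ₊₂ ≤ cₙ + 2 max A`: so `Aⁿ(y, x) - nσ` is bounded below and eventually
bounded above, uniformly in `(y, x)`. Hence `α = -σ` works, while any other `α` adds a linear
drift to this sequence, sending it to `-∞` or to `+∞`.
-/

/-- The iterated costs: `iterCost A n = A^(n+1)`, where `A¹ = A` and
`A^(n+1)(y, x) = inf_{z ∈ M} (Aⁿ(y, z) + A(z, x))`. -/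
noncomputable def iterCost {M : Type*} [MetricSpace M] [CompactSpace M] [Nonempty M]
    (A : M × M → ℝ) : ℕ → M × M → ℝ
  | 0 => A
  | n + 1 => fun p => ⨅ z : M, (iterCost A n (p.1, z) + A (z, p.2))

open Filter Set

section Slope

-- Indices are lengths minus one, as for `iterCost`: `c (m + n + 1)` belongs to length
-- `(m + 1) + (n + 1)`.
variable {c b : ℕ → ℝ}

lemma mul_le_of_superadditive (hc : ∀ m n, c m + c n ≤ c (m + n + 1)) (k n : ℕ) :
    (k + 1 : ℝ) * c n ≤ c (k * (n + 1) + n) := by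
  induction k with
  | zero => simp
  | succ k ih =>
    have step := hc (k * (n + 1) + n) n
    rw [show (k + 1) * (n + 1) + n = k * (n + 1) + n + n + 1 by ring]
    push_cast
    linarith

lemma exists_mul_mem_Icc_of_superadditive_of_subadditive
    (hc : ∀ m n, c m + c n ≤ c (m + n + 1)) (hb : ∀ m n, b (m + n + 1) ≤ b m + b n)
    (hcb : ∀ n, c n ≤ b n) :
    ∃ σ : ℝ, ∀ n : ℕ, c n ≤ (n + 1) * σ ∧ (n + 1) * σ ≤ b n := by
  have hb' : ∀ m n, -b m + -b n ≤ -b (m + n + 1) := fun m n => by linarith [hb m n]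
  have cross (n k : ℕ) : c n / (n + 1) ≤ b k / (k + 1) := by
    rw [div_le_div_iff₀ (by positivity) (by positivity)]
    calc c n * (k + 1) = (k + 1 : ℝ) * c n := mul_comm _ _
      _ ≤ c (k * (n + 1) + n) := mul_le_of_superadditive hc k n
      _ ≤ b (k * (n + 1) + n) := hcb _
      _ = b (n * (k + 1) + k) := by ring_nf
      _ ≤ b k * (n + 1) := by linarith [mul_le_of_superadditive hb' n k]
  have hbdd : BddAbove (range fun n : ℕ => c n / (n + 1)) :=
    ⟨b 0 / (0 + 1), by rintro _ ⟨n, rfl⟩; exact_mod_cast cross n 0⟩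
  refine ⟨⨆ n : ℕ, c n / (n + 1), fun n => ⟨?_, ?_⟩⟩
  · rw [← div_le_iff₀' (by positivity)]
    exact le_ciSup hbdd n
  · rw [← le_div_iff₀' (by positivity)]
    exact ciSup_le fun k => cross k n

end Slope

section Drift

variable {s : ℕ → ℝ} {δ C : ℝ}

lemma tendsto_add_mul_atTop (hs : BddBelow (range s)) (hδ : 0 < δ) :
    Tendsto (fun n : ℕ => s n + (n + 1 : ℝ) * δ) atTop atTop := by
  obtain ⟨L, hL⟩ := hs
  exact tendsto_atTop_add_left_of_le _ L (fun n => hL ⟨n, rfl⟩)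
    ((tendsto_atTop_add_const_right _ 1 tendsto_natCast_atTop_atTop).atTop_mul_const hδ)

lemma tendsto_add_mul_atBot (hs : ∀ᶠ n in atTop, s n ≤ C) (hδ : δ < 0) :
    Tendsto (fun n : ℕ => s n + (n + 1 : ℝ) * δ) atTop atBot :=
  tendsto_atBot_add_left_of_ge' _ C hs
    ((tendsto_atTop_add_const_right _ 1 tendsto_natCast_atTop_atTop).atTop_mul_const_of_neg hδ)

lemma bddBelow_and_not_tendsto_iff {f : ℕ → ℝ} {α₀ : ℝ}
    (hlow : BddBelow (range fun n : ℕ => f n + (n + 1 : ℝ) * α₀))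
    (hup : ∀ᶠ n : ℕ in atTop, f n + (n + 1 : ℝ) * α₀ ≤ C) (α : ℝ) :
    (BddBelow (range fun n : ℕ => f n + (n + 1 : ℝ) * α) ∧
      ¬ Tendsto (fun n : ℕ => f n + (n + 1 : ℝ) * α) atTop atTop) ↔ α = α₀ := by
  have shift : (fun n : ℕ => f n + (n + 1 : ℝ) * α) =
      fun n : ℕ => (f n + (n + 1 : ℝ) * α₀) + (n + 1 : ℝ) * (α - α₀) := by
    ext n; ring
  constructor
  · rintro ⟨hbdd, hnot⟩
    rcases lt_trichotomy α α₀ with hlt | heq | hgt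
    · rw [shift] at hbdd
      exact absurd hbdd (not_bddBelow_of_tendsto_atBot (tendsto_add_mul_atBot hup (sub_neg.2 hlt)))
    · exact heq
    · rw [shift] at hnot
      exact absurd (tendsto_add_mul_atTop hlow (sub_pos.2 hgt)) hnot
  · rintro rfl
    refine ⟨hlow, fun htop => ?_⟩
    obtain ⟨n, hgt, hle⟩ := ((htop.eventually_gt_atTop C).and hup).exists
    exact hgt.not_ge hle

end Drift

section IterCost

variable {M : Type*} [MetricSpace M] [CompactSpace M] [Nonempty M] (A : M × M → ℝ)

lemma iterCost_zero : iterCost A 0 = A := rfl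

lemma iterCost_succ (n : ℕ) (p : M × M) :
    iterCost A (n + 1) p = ⨅ z : M, (iterCost A n (p.1, z) + A (z, p.2)) := rfl

lemma mul_le_iterCost {m : ℝ} (hm : ∀ p, m ≤ A p) (n : ℕ) (p : M × M) :
    (n + 1 : ℝ) * m ≤ iterCost A n p := by
  induction n generalizing p with
  | zero => simpa [iterCost_zero] using hm p
  | succ n ih =>
    rw [iterCost_succ]
    refine le_ciInf fun z => ?_
    push_cast
    linarith [ih (p.1, z), hm (z, p.2)]

variable {A}

lemma bddBelow_range_iterCost (hA : BddBelow (range A)) (n : ℕ) :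
    BddBelow (range (iterCost A n)) := by
  obtain ⟨m, hm⟩ := hA
  exact ⟨(n + 1) * m, by rintro _ ⟨p, rfl⟩; exact mul_le_iterCost A (fun p => hm ⟨p, rfl⟩) n p⟩

lemma iterCost_succ_le (hA : BddBelow (range A)) (n : ℕ) (y z x : M) :
    iterCost A (n + 1) (y, x) ≤ iterCost A n (y, z) + A (z, x) := by
  obtain ⟨m, hm⟩ := hA
  refine ciInf_le ⟨(n + 1) * m + m, ?_⟩ z
  rintro _ ⟨w, rfl⟩
  exact add_le_add (mul_le_iterCost A (fun p => hm ⟨p, rfl⟩) n _) (hm ⟨_, rfl⟩)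

lemma iterCost_add_le (hA : BddBelow (range A)) (a b : ℕ) (y z x : M) :
    iterCost A (a + b + 1) (y, x) ≤ iterCost A a (y, z) + iterCost A b (z, x) := by
  induction b generalizing x with
  | zero => exact iterCost_succ_le hA a y z x
  | succ b ih =>
    rw [iterCost_succ A b, ← sub_le_iff_le_add']
    refine le_ciInf fun w => ?_
    have hlast : iterCost A (a + (b + 1) + 1) (y, x) ≤ iterCost A (a + b + 1) (y, w) + A (w, x) :=
      iterCost_succ_le hA (a + b + 1) y w x
    linarith [ih w]

lemma iterCost_le_mul (hA : BddBelow (range A)) {M₀ : ℝ} (hM₀ : ∀ p, A p ≤ M₀) (n : ℕ)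
    (p : M × M) : iterCost A n p ≤ (n + 1 : ℝ) * M₀ := by
  induction n generalizing p with
  | zero => simpa [iterCost_zero] using hM₀ p
  | succ n ih =>
    have z := Classical.arbitrary M
    push_cast
    linarith [iterCost_succ_le hA n p.1 z p.2, ih (p.1, z), hM₀ (z, p.2)]

lemma iterCost_add_two_le (hA : BddBelow (range A)) (n : ℕ) (y z w x : M) :
    iterCost A (n + 2) (y, x) ≤ A (y, z) + iterCost A n (z, w) + A (w, x) := by
  have hfirst : iterCost A (n + 2) (y, x) ≤ A (y, z) + iterCost A (n + 1) (z, x) := by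
    simpa [iterCost_zero] using iterCost_add_le hA 0 (n + 1) y z x
  linarith [iterCost_succ_le hA n z w x]

end IterCost

section MinMaxCost

variable {M : Type*} [MetricSpace M] [CompactSpace M] [Nonempty M] {A : M × M → ℝ}

noncomputable def minCost (A : M × M → ℝ) (n : ℕ) : ℝ := ⨅ p : M × M, iterCost A n p

noncomputable def maxCost (A : M × M → ℝ) (n : ℕ) : ℝ := ⨆ p : M × M, iterCost A n p

lemma minCost_le (hA : BddBelow (range A)) (n : ℕ) (p : M × M) : minCost A n ≤ iterCost A n p :=
  ciInf_le (bddBelow_range_iterCost hA n) p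

lemma le_maxCost (hA : BddBelow (range A)) (hA' : BddAbove (range A)) (n : ℕ) (p : M × M) :
    iterCost A n p ≤ maxCost A n := by
  obtain ⟨M₀, hM₀⟩ := hA'
  refine le_ciSup ⟨(n + 1) * M₀, ?_⟩ p
  rintro _ ⟨q, rfl⟩
  exact iterCost_le_mul hA (fun p => hM₀ ⟨p, rfl⟩) n q

lemma minCost_le_maxCost (hA : BddBelow (range A)) (hA' : BddAbove (range A)) (n : ℕ) :
    minCost A n ≤ maxCost A n :=
  (minCost_le hA n (Classical.arbitrary _)).trans (le_maxCost hA hA' n _)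

lemma maxCost_add_le (hA : BddBelow (range A)) (hA' : BddAbove (range A)) (a b : ℕ) :
    maxCost A (a + b + 1) ≤ maxCost A a + maxCost A b := by
  refine ciSup_le fun ⟨y, x⟩ => ?_
  have z := Classical.arbitrary M
  linarith [iterCost_add_le hA a b y z x, le_maxCost hA hA' a (y, z), le_maxCost hA hA' b (z, x)]

-- `iterCost` extends paths at their end, so the induction carries the cheapest cost
-- `⨅ w, iterCost A b (w, x)` of arriving at `x` rather than `minCost A b`.
lemma minCost_add_iInf_le (hA : BddBelow (range A)) (a b : ℕ) (y x : M) :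
    minCost A a + ⨅ w, iterCost A b (w, x) ≤ iterCost A (a + b + 1) (y, x) := by
  have hbdd (n : ℕ) (v : M) : BddBelow (range fun w => iterCost A n (w, v)) :=
    ⟨minCost A n, by rintro _ ⟨w, rfl⟩; exact minCost_le hA n _⟩
  induction b generalizing x with
  | zero =>
    rw [iterCost_succ]
    exact le_ciInf fun z => add_le_add (minCost_le hA a _) (ciInf_le (hbdd 0 x) z)
  | succ b ih =>
    rw [iterCost_succ]
    refine le_ciInf fun z => ?_
    show _ ≤ iterCost A (a + b + 1) (y, z) + A (z, x)
    have hstep : ⨅ w, iterCost A (b + 1) (w, x) ≤ (⨅ w, iterCost A b (w, z)) + A (z, x) := by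
      rw [← sub_le_iff_le_add]
      exact le_ciInf fun w =>
        sub_le_iff_le_add.2 ((ciInf_le (hbdd (b + 1) x) w).trans (iterCost_succ_le hA b w z x))
    linarith [ih z]

lemma minCost_add_le (hA : BddBelow (range A)) (a b : ℕ) :
    minCost A a + minCost A b ≤ minCost A (a + b + 1) := by
  refine le_ciInf fun ⟨y, x⟩ => ?_
  have hb : minCost A b ≤ ⨅ w, iterCost A b (w, x) := le_ciInf fun w => minCost_le hA b (w, x)
  linarith [minCost_add_iInf_le hA a b y x]

lemma maxCost_add_two_le (hA : BddBelow (range A)) {M₀ : ℝ} (hM₀ : ∀ p, A p ≤ M₀) (n : ℕ) :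
    maxCost A (n + 2) ≤ minCost A n + 2 * M₀ := by
  refine ciSup_le fun ⟨y, x⟩ => ?_
  rw [← sub_le_iff_le_add]
  refine le_ciInf fun ⟨z, w⟩ => ?_
  linarith [iterCost_add_two_le hA n y z w x, hM₀ (y, z), hM₀ (w, x)]

lemma exists_bddBelow_eventually_le_iterCost_add_mul (hA : BddBelow (range A))
    (hA' : BddAbove (range A)) :
    ∃ α C : ℝ, ∀ p : M × M,
      BddBelow (range fun n : ℕ => iterCost A n p + (n + 1 : ℝ) * α) ∧
      ∀ᶠ n : ℕ in atTop, iterCost A n p + (n + 1 : ℝ) * α ≤ C := by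
  obtain ⟨M₀, hM₀⟩ := hA'
  have hM₀' : ∀ p, A p ≤ M₀ := fun p => hM₀ ⟨p, rfl⟩
  obtain ⟨σ, hσ⟩ := exists_mul_mem_Icc_of_superadditive_of_subadditive (minCost_add_le hA)
    (maxCost_add_le hA ⟨M₀, hM₀⟩) (minCost_le_maxCost hA ⟨M₀, hM₀⟩)
  refine ⟨-σ, 2 * M₀ - 2 * σ, fun p => ⟨⟨2 * σ - 2 * M₀, ?_⟩, ?_⟩⟩
  · rintro _ ⟨n, rfl⟩
    have hn2 := (hσ (n + 2)).2
    push_cast at hn2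
    linarith [maxCost_add_two_le hA hM₀' n, minCost_le hA n p]
  · filter_upwards [eventually_ge_atTop 2] with n hn
    obtain ⟨k, rfl⟩ := Nat.exists_eq_add_of_le' hn
    push_cast
    linarith [le_maxCost hA ⟨M₀, hM₀⟩ (k + 2) p, maxCost_add_two_le hA hM₀' k, (hσ k).1]

end MinMaxCost

/-- Existence and uniqueness of the Peierls constant: there is a unique `α ∈ ℝ` such
that for every `(y, x)` the sequence `n ↦ Aⁿ(y, x) + n α` is bounded below and does
not tend to `+∞`. -/
theorem peierls_constant_exists_unique
    {M : Type*} [MetricSpace M] [CompactSpace M] [Nonempty M]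
    (A : M × M → ℝ) (hA : Continuous A) :
    ∃! α : ℝ, ∀ p : M × M,
      BddBelow (Set.range fun n : ℕ => iterCost A n p + (n + 1 : ℝ) * α) ∧
      ¬ Filter.Tendsto (fun n : ℕ => iterCost A n p + (n + 1 : ℝ) * α)
        Filter.atTop Filter.atTop := by
  obtain ⟨α₀, C, hα₀⟩ := exists_bddBelow_eventually_le_iterCost_add_mul
    (isCompact_range hA).bddBelow (isCompact_range hA).bddAbove
  have key (p : M × M) := bddBelow_and_not_tendsto_iff (hα₀ p).1 (hα₀ p).2
  exact ⟨α₀, fun p => (key p α₀).2 rfl, fun α hα => (key (Classical.arbitrary _) α).1 (hα _)⟩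
end
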